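/- In the single-field General Lotto game with Scouts with budgets B, R > 0 and detection probability u ∈ [0,1), if B/R ≥ 1, then the value of the game equals 1 - (1-u)²/(2((B/R) - u)). -/

import Mathlib

open MeasureTheory Set

/-- A strategy for Red in the General Lotto game with Scouts: the law of a nonnegative
random variable `X` with `E[X] ≤ R`. -/
structure RedStrategy (R : ℝ) where
  μ : Measure ℝ
  prob : IsProbabilityMeasure μ
  nonneg : μ (Iio 0) = 0
  budget : ∫⁻ x, ENNReal.ofReal x ∂μ ≤ ENNReal.ofReal R

/-- A strategy for Blue in GL-S(B,R,u): a calling probability `t x ∈ [0,1]` used when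
Red's allocation `x` is revealed (probability `u`), and the law `ν` of the nonnegative
allocation `Z` used when it is not revealed.  Feasibility: for every feasible Red
strategy, `u·E[t(X)·X] + (1-u)·E[Z] ≤ B`. -/
structure BlueStrategy (B R u : ℝ) where
  t : ℝ → ℝ
  t_mble : Measurable t
  t_mem : ∀ x, t x ∈ Icc (0 : ℝ) 1
  ν : Measure ℝ
  prob : IsProbabilityMeasure ν
  nonneg : ν (Iio 0) = 0
  budget : ∀ σR : RedStrategy R,
    ENNReal.ofReal u * ∫⁻ x, ENNReal.ofReal (t x * x) ∂σR.μ
      + ENNReal.ofReal (1 - u) * ∫⁻ z, ENNReal.ofReal z ∂ν ≤ ENNReal.ofReal B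

/-- Expected payoff to Blue (his win probability):
`u·E[t(X)] + (1-u)·P(Z ≥ X)`, ties going to Blue. -/
noncomputable def payoff {B R u : ℝ} (σB : BlueStrategy B R u) (σR : RedStrategy R) :
    ENNReal :=
  ENNReal.ofReal u * ∫⁻ x, ENNReal.ofReal (σB.t x) ∂σR.μ
    + ENNReal.ofReal (1 - u) * ∫⁻ x, σB.ν {z | x ≤ z} ∂σR.μ


/-! Put `q = (1 - u) / (B / R - u)` and `c = 2R / q`. Blue always calls a revealed allocation
and otherwise plays `Z` uniform on `[0, c]`; this costs `uR + (1 - u) c / 2 = B`, and since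
`P(Z ≥ x) ≥ 1 - x / c` it wins with probability at least `u + (1 - u)(1 - R / c)` against any
`X` with `E[X] ≤ R`.

Red plays `0` with probability `1 - q` and uniform on `[0, c]` otherwise. Against this, any
calling rule satisfies `t(x) ≤ 1 - x / c + t(x) x / c` on `[0, c]`, and
`P(X ≤ z) ≤ 1 - q + q z / c`, so Blue wins with probability at most
`u (1 - q / 2) + (1 - u)(1 - q) + (u E[t(X) X] + (1 - u) q E[Z]) / c`. Averaging Blue's budget
constraint (weight `q`) with `E[t(X) X] ≤ R` (weight `1 - q`) bounds the numerator by `R`, and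
both bounds equal `1 - (1 - u) q / 2`. -/

open ProbabilityTheory
open ENNReal (ofReal)
open scoped ENNReal

section UniformIcc

variable {c : ℝ}

lemma isProbabilityMeasure_cond_Icc (hc : 0 < c) :
    IsProbabilityMeasure (volume[|Icc (0 : ℝ) c]) :=
  cond_isProbabilityMeasure_of_finite (by simp [hc]) (by simp)

lemma cond_Icc_Iic_le (z : ℝ) :
    volume[|Icc (0 : ℝ) c] (Iic z) ≤ ofReal z / ofReal c := by
  rw [cond_apply measurableSet_Icc, Real.volume_Icc, sub_zero, ENNReal.div_eq_inv_mul]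
  gcongr
  calc volume (Icc 0 c ∩ Iic z)
      ≤ volume (Icc 0 z) := measure_mono fun x hx => ⟨hx.1.1, hx.2⟩
    _ = ofReal z := by rw [Real.volume_Icc, sub_zero]

lemma one_le_cond_Icc_Ici_add (hc : 0 < c) (x : ℝ) :
    1 ≤ volume[|Icc (0 : ℝ) c] (Ici x) + ofReal x / ofReal c := by
  have := isProbabilityMeasure_cond_Icc hc
  calc 1 = volume[|Icc (0 : ℝ) c] (Ici x) + volume[|Icc (0 : ℝ) c] (Iio x) := by
        rw [← compl_Ici, measure_add_measure_compl measurableSet_Ici, measure_univ]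
    _ ≤ _ := by
        gcongr
        exact (measure_mono Iio_subset_Iic_self).trans (cond_Icc_Iic_le x)

lemma lintegral_ofReal_cond_Icc (hc : 0 < c) :
    ∫⁻ x, ofReal x ∂volume[|Icc (0 : ℝ) c] = ofReal (c / 2) := by
  have hint : ∫⁻ x in Icc 0 c, ofReal x = ofReal (c ^ 2 / 2) := by
    have hnonneg : 0 ≤ᵐ[volume.restrict (Icc 0 c)] fun x : ℝ => x :=
      (ae_restrict_mem measurableSet_Icc).mono fun x hx => hx.1
    rw [← ofReal_integral_eq_lintegral_ofReal continuous_id'.integrableOn_Icc hnonneg,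
      integral_Icc_eq_integral_Ioc, ← intervalIntegral.integral_of_le hc.le, integral_id]
    ring_nf
  rw [ProbabilityTheory.cond, lintegral_smul_measure, Real.volume_Icc, sub_zero, hint,
    smul_eq_mul, ← ENNReal.ofReal_inv_of_pos hc, ← ENNReal.ofReal_mul (by positivity)]
  congr 1
  field_simp

end UniformIcc

lemma lintegral_measure_Ici_eq_lintegral_measure_Iic {α : Type*} [TopologicalSpace α]
    [LinearOrder α] [OrderClosedTopology α] [MeasurableSpace α] [OpensMeasurableSpace α]
    [SecondCountableTopology α] (μ ν : Measure α) [SFinite μ] [SFinite ν] :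
    ∫⁻ x, ν (Ici x) ∂μ = ∫⁻ z, μ (Iic z) ∂ν := by
  have hle : MeasurableSet {p : α × α | p.1 ≤ p.2} :=
    measurableSet_le measurable_fst measurable_snd
  exact (Measure.prod_apply hle).symm.trans (Measure.prod_apply_symm hle)

lemma lintegral_ofReal_add_lintegral_div_le {μ : Measure ℝ} [IsProbabilityMeasure μ] {c : ℝ}
    (hc : 0 < c) (hμ : ∀ᵐ x ∂μ, x ∈ Icc 0 c) {t : ℝ → ℝ}
    (ht : ∀ x, t x ∈ Icc (0 : ℝ) 1) :
    ∫⁻ x, ofReal (t x) ∂μ + (∫⁻ x, ofReal x ∂μ) / ofReal c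
      ≤ 1 + (∫⁻ x, ofReal (t x * x) ∂μ) / ofReal c := by
  have hc' : (ofReal c)⁻¹ ≠ ∞ := ENNReal.inv_ne_top.2 (by simpa using hc)
  simp only [ENNReal.div_eq_inv_mul, ← lintegral_const_mul' _ _ hc']
  calc _ ≤ ∫⁻ x, (ofReal (t x) + (ofReal c)⁻¹ * ofReal x) ∂μ :=
        le_lintegral_add _ _
    _ ≤ ∫⁻ x, (1 + (ofReal c)⁻¹ * ofReal (t x * x)) ∂μ := by
        refine lintegral_mono_ae (hμ.mono fun x hx => ?_)
        obtain ⟨ht0, ht1⟩ := ht x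
        have hxc : x / c ≤ 1 := (div_le_one hc).2 hx.2
        have key : t x + x / c ≤ 1 + t x * x / c := by
          rw [mul_div_assoc]
          nlinarith [mul_nonneg (sub_nonneg.2 ht1) (sub_nonneg.2 hxc)]
        simp only [← ENNReal.div_eq_inv_mul, ← ENNReal.ofReal_div_of_pos hc]
        rw [← ENNReal.ofReal_add ht0 (div_nonneg hx.1 hc.le), ← ENNReal.ofReal_one,
          ← ENNReal.ofReal_add zero_le_one (div_nonneg (mul_nonneg ht0 hx.1) hc.le)]
        exact ENNReal.ofReal_le_ofReal key
    _ = _ := by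
        rw [lintegral_add_left measurable_const, lintegral_const, measure_univ, mul_one]

lemma RedStrategy.lintegral_ofReal_mul_le {R : ℝ} (σR : RedStrategy R) {t : ℝ → ℝ}
    (ht : ∀ x, t x ∈ Icc (0 : ℝ) 1) :
    ∫⁻ x, ofReal (t x * x) ∂σR.μ ≤ ofReal R := by
  refine le_trans (lintegral_mono_ae ?_) σR.budget
  filter_upwards [measure_eq_zero_iff_ae_notMem.1 σR.nonneg] with x hx
  exact ENNReal.ofReal_le_ofReal (mul_le_of_le_one_left (not_lt.1 hx) (ht x).2)

noncomputable def zeroOrUniform (q c : ℝ) : Measure ℝ :=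
  ofReal (1 - q) • Measure.dirac 0 + ofReal q • volume[|Icc (0 : ℝ) c]

section ZeroOrUniform

variable {q c : ℝ}

instance : SFinite (zeroOrUniform q c) := by
  unfold zeroOrUniform
  infer_instance

lemma lintegral_zeroOrUniform (f : ℝ → ℝ≥0∞) :
    ∫⁻ x, f x ∂zeroOrUniform q c
      = ofReal (1 - q) * f 0 + ofReal q * ∫⁻ x, f x ∂volume[|Icc (0 : ℝ) c] := by
  rw [zeroOrUniform, lintegral_add_measure, lintegral_smul_measure, lintegral_smul_measure,
    lintegral_dirac, smul_eq_mul, smul_eq_mul]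

lemma isProbabilityMeasure_zeroOrUniform (hq0 : 0 ≤ q) (hq1 : q ≤ 1) (hc : 0 < c) :
    IsProbabilityMeasure (zeroOrUniform q c) := by
  have := isProbabilityMeasure_cond_Icc hc
  constructor
  rw [zeroOrUniform, Measure.add_apply, Measure.smul_apply, Measure.smul_apply, measure_univ,
    measure_univ, smul_eq_mul, smul_eq_mul, mul_one, mul_one,
    ← ENNReal.ofReal_add (sub_nonneg.2 hq1) hq0, sub_add_cancel, ENNReal.ofReal_one]

lemma ae_mem_Icc_zeroOrUniform (hc : 0 ≤ c) : ∀ᵐ x ∂zeroOrUniform q c, x ∈ Icc 0 c := by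
  rw [zeroOrUniform, ae_add_measure_iff]
  exact ⟨Measure.ae_smul_measure ((ae_dirac_iff measurableSet_Icc).2 ⟨le_rfl, hc⟩) _,
    Measure.ae_smul_measure (ae_cond_mem measurableSet_Icc) _⟩

lemma lintegral_ofReal_zeroOrUniform (hq0 : 0 ≤ q) (hc : 0 < c) :
    ∫⁻ x, ofReal x ∂zeroOrUniform q c = ofReal (q * c / 2) := by
  rw [lintegral_zeroOrUniform, lintegral_ofReal_cond_Icc hc, ENNReal.ofReal_zero, mul_zero,
    zero_add, ← ENNReal.ofReal_mul hq0, mul_div_assoc]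

lemma zeroOrUniform_Iic_le (z : ℝ) :
    zeroOrUniform q c (Iic z) ≤ ofReal (1 - q) + ofReal q * (ofReal z / ofReal c) := by
  rw [zeroOrUniform, Measure.add_apply, Measure.smul_apply, Measure.smul_apply, smul_eq_mul,
    smul_eq_mul]
  gcongr
  · exact mul_le_of_le_one_right' prob_le_one
  · exact cond_Icc_Iic_le z

lemma lintegral_ofReal_zeroOrUniform_le (hq0 : 0 ≤ q) (hq1 : q ≤ 1) (hc : 0 < c)
    {t : ℝ → ℝ} (ht : ∀ x, t x ∈ Icc (0 : ℝ) 1) :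
    ∫⁻ x, ofReal (t x) ∂zeroOrUniform q c ≤ ofReal (1 - q / 2)
      + (∫⁻ x, ofReal (t x * x) ∂zeroOrUniform q c) / ofReal c := by
  have := isProbabilityMeasure_zeroOrUniform hq0 hq1 hc
  have h := lintegral_ofReal_add_lintegral_div_le (μ := zeroOrUniform q c) hc
    (ae_mem_Icc_zeroOrUniform hc.le) ht
  have hsplit : (1 : ℝ≥0∞) = ofReal (1 - q / 2) + ofReal (q / 2) := by
    rw [← ENNReal.ofReal_add (by linarith) (by positivity), sub_add_cancel, ENNReal.ofReal_one]
  have hmean : q * c / 2 / c = q / 2 := by field_simp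
  rw [lintegral_ofReal_zeroOrUniform hq0 hc, ← ENNReal.ofReal_div_of_pos hc, hmean, hsplit,
    add_right_comm] at h
  exact ENNReal.le_of_add_le_add_right ENNReal.ofReal_ne_top h

lemma lintegral_measure_Ici_zeroOrUniform_le (hc : 0 < c) (ν : Measure ℝ)
    [IsProbabilityMeasure ν] :
    ∫⁻ x, ν (Ici x) ∂zeroOrUniform q c
      ≤ ofReal (1 - q) + ofReal q * ((∫⁻ z, ofReal z ∂ν) / ofReal c) := by
  rw [lintegral_measure_Ici_eq_lintegral_measure_Iic]
  calc ∫⁻ z, zeroOrUniform q c (Iic z) ∂ν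
      ≤ ∫⁻ z, (ofReal (1 - q) + ofReal q * (ofReal z / ofReal c)) ∂ν :=
        lintegral_mono zeroOrUniform_Iic_le
    _ = _ := by
        have hc' : (ofReal c)⁻¹ ≠ ∞ := ENNReal.inv_ne_top.2 (by simpa using hc)
        simp only [ENNReal.div_eq_inv_mul]
        rw [lintegral_add_left measurable_const, lintegral_const, measure_univ, mul_one,
          lintegral_const_mul' _ _ ENNReal.ofReal_ne_top, lintegral_const_mul' _ _ hc']

end ZeroOrUniform

noncomputable def uniformBlue {B R u c : ℝ} (hc : 0 < c) (hu0 : 0 ≤ u) (hu1 : u ≤ 1)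
    (hR : 0 ≤ R) (hB : u * R + (1 - u) * (c / 2) ≤ B) : BlueStrategy B R u where
  t _ := 1
  t_mble := measurable_const
  t_mem _ := ⟨zero_le_one, le_rfl⟩
  ν := volume[|Icc (0 : ℝ) c]
  prob := isProbabilityMeasure_cond_Icc hc
  nonneg := measure_eq_zero_iff_ae_notMem.2 <|
    (ae_cond_mem measurableSet_Icc).mono fun _ hx => not_lt.2 hx.1
  budget σR := by
    simp only [one_mul]
    calc _ ≤ ofReal u * ofReal R + ofReal (1 - u) * ofReal (c / 2) := by
          rw [lintegral_ofReal_cond_Icc hc]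
          gcongr
          exact σR.budget
      _ = ofReal (u * R + (1 - u) * (c / 2)) := by
          rw [ENNReal.ofReal_add (by positivity) (mul_nonneg (by linarith) (by positivity)),
            ENNReal.ofReal_mul hu0, ENNReal.ofReal_mul (by linarith)]
      _ ≤ ofReal B := ENNReal.ofReal_le_ofReal hB

noncomputable def zeroOrUniformRed {R q c : ℝ} (hq0 : 0 ≤ q) (hq1 : q ≤ 1) (hc : 0 < c)
    (hqc : q * c = 2 * R) : RedStrategy R where
  μ := zeroOrUniform q c
  prob := isProbabilityMeasure_zeroOrUniform hq0 hq1 hc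
  nonneg := measure_eq_zero_iff_ae_notMem.2 <|
    (ae_mem_Icc_zeroOrUniform hc.le).mono fun _ hx => not_lt.2 hx.1
  budget := by
    rw [lintegral_ofReal_zeroOrUniform hq0 hc, hqc, mul_div_cancel_left₀ R two_ne_zero]

lemma BlueStrategy.mix_budget_le {B R u q : ℝ} (σB : BlueStrategy B R u) (σR : RedStrategy R)
    (hB : 0 ≤ B) (hR : 0 ≤ R) (hu0 : 0 ≤ u) (hq0 : 0 ≤ q) (hq1 : q ≤ 1) :
    ofReal u * ∫⁻ x, ofReal (σB.t x * x) ∂σR.μ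
        + ofReal (1 - u) * (ofReal q * ∫⁻ z, ofReal z ∂σB.ν)
      ≤ ofReal (q * B + (1 - q) * u * R) := by
  have hu : ofReal u = ofReal q * ofReal u + ofReal (1 - q) * ofReal u := by
    rw [← add_mul, ← ENNReal.ofReal_add hq0 (by linarith), add_sub_cancel, ENNReal.ofReal_one,
      one_mul]
  calc _ = ofReal q * (ofReal u * ∫⁻ x, ofReal (σB.t x * x) ∂σR.μ
            + ofReal (1 - u) * ∫⁻ z, ofReal z ∂σB.ν)
          + ofReal (1 - q) * ofReal u * ∫⁻ x, ofReal (σB.t x * x) ∂σR.μ := by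
        conv_lhs => rw [hu]
        ring
    _ ≤ ofReal q * ofReal B + ofReal (1 - q) * ofReal u * ofReal R := by
        gcongr
        · exact σB.budget σR
        · exact σR.lintegral_ofReal_mul_le σB.t_mem
    _ = ofReal (q * B + (1 - q) * u * R) := by
        rw [ENNReal.ofReal_add (by positivity) (mul_nonneg (mul_nonneg (by linarith) hu0) hR),
          ENNReal.ofReal_mul hq0, ENNReal.ofReal_mul (mul_nonneg (sub_nonneg.2 hq1) hu0),
          ENNReal.ofReal_mul (sub_nonneg.2 hq1)]

lemma le_payoff_uniformBlue {B R u c : ℝ} (hc : 0 < c) (hu0 : 0 ≤ u) (hu1 : u ≤ 1)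
    (hR : 0 ≤ R) (hB : u * R + (1 - u) * (c / 2) ≤ B) (σR : RedStrategy R) :
    ofReal (u + (1 - u) * (1 - R / c)) ≤ payoff (uniformBlue hc hu0 hu1 hR hB) σR := by
  have := σR.prob
  have hmatch : 1 ≤ ∫⁻ x, volume[|Icc (0 : ℝ) c] (Ici x) ∂σR.μ + ofReal (R / c) :=
    calc 1 = ∫⁻ _, 1 ∂σR.μ := by simp
      _ ≤ ∫⁻ x, (volume[|Icc (0 : ℝ) c] (Ici x) + ofReal x / ofReal c) ∂σR.μ :=
        lintegral_mono (one_le_cond_Icc_Ici_add hc)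
      _ = ∫⁻ x, volume[|Icc (0 : ℝ) c] (Ici x) ∂σR.μ
            + (∫⁻ x, ofReal x ∂σR.μ) / ofReal c := by
        simp only [ENNReal.div_eq_inv_mul]
        rw [lintegral_add_right _ (ENNReal.measurable_ofReal.const_mul _),
          lintegral_const_mul _ ENNReal.measurable_ofReal]
      _ ≤ _ := by
        rw [ENNReal.ofReal_div_of_pos hc]
        gcongr
        exact σR.budget
  calc ofReal (u + (1 - u) * (1 - R / c))
      ≤ ofReal u * 1 + ofReal (1 - u) * ofReal (1 - R / c) := by
        rw [mul_one, ← ENNReal.ofReal_mul (by linarith)]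
        exact ENNReal.ofReal_add_le
    _ ≤ payoff (uniformBlue hc hu0 hu1 hR hB) σR := by
        simp only [payoff, uniformBlue, ENNReal.ofReal_one, lintegral_const, measure_univ,
          mul_one]
        gcongr
        rw [ENNReal.ofReal_sub _ (by positivity), ENNReal.ofReal_one]
        exact tsub_le_iff_right.2 hmatch

lemma payoff_zeroOrUniformRed_le {B R u q c : ℝ} (hB0 : 0 ≤ B) (hu0 : 0 ≤ u) (hu1 : u ≤ 1)
    (hq0 : 0 ≤ q) (hq1 : q ≤ 1) (hc : 0 < c) (hqc : q * c = 2 * R)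
    (hB : q * B + (1 - q) * u * R ≤ R) (σB : BlueStrategy B R u) :
    payoff σB (zeroOrUniformRed hq0 hq1 hc hqc) ≤ ofReal (1 - (1 - u) * q / 2) := by
  set σR := zeroOrUniformRed hq0 hq1 hc hqc
  have hR : 0 ≤ R := by nlinarith
  have := σB.prob
  set T := ∫⁻ x, ofReal (σB.t x * x) ∂σR.μ
  set Z := ∫⁻ z, ofReal z ∂σB.ν
  have hspend : ofReal u * T + ofReal (1 - u) * (ofReal q * Z) ≤ ofReal R :=
    (σB.mix_budget_le σR hB0 hR hu0 hq0 hq1).trans (ENNReal.ofReal_le_ofReal hB)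
  have hRc : ofReal R / ofReal c = ofReal (q / 2) := by
    rw [← ENNReal.ofReal_div_of_pos hc]
    congr 1
    field_simp
    linarith
  calc payoff σB σR
      ≤ ofReal u * (ofReal (1 - q / 2) + T / ofReal c)
        + ofReal (1 - u) * (ofReal (1 - q) + ofReal q * (Z / ofReal c)) := by
        unfold payoff
        gcongr
        · exact lintegral_ofReal_zeroOrUniform_le hq0 hq1 hc σB.t_mem
        · exact lintegral_measure_Ici_zeroOrUniform_le hc σB.ν
    _ = ofReal u * ofReal (1 - q / 2) + ofReal (1 - u) * ofReal (1 - q)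
        + (ofReal u * T + ofReal (1 - u) * (ofReal q * Z)) / ofReal c := by
        simp only [div_eq_mul_inv]
        ring
    _ ≤ ofReal u * ofReal (1 - q / 2) + ofReal (1 - u) * ofReal (1 - q)
        + ofReal R / ofReal c := by gcongr
    _ = ofReal (1 - (1 - u) * q / 2) := by
        have hrevealed : 0 ≤ u * (1 - q / 2) := mul_nonneg hu0 (by linarith)
        have hhidden : 0 ≤ (1 - u) * (1 - q) := mul_nonneg (by linarith) (by linarith)
        rw [hRc, ← ENNReal.ofReal_mul hu0, ← ENNReal.ofReal_mul (by linarith),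
          ← ENNReal.ofReal_add hrevealed hhidden,
          ← ENNReal.ofReal_add (add_nonneg hrevealed hhidden) (by positivity)]
        ring_nf

theorem stmt_9_general (B R u : ℝ) (hR : 0 < R)
    (hu0 : 0 ≤ u) (hu1 : u < 1) (hcase : 1 ≤ B / R) :
    ∃ (σB : BlueStrategy B R u) (σR : RedStrategy R),
      (∀ σR' : RedStrategy R,
        ENNReal.ofReal (1 - (1 - u) ^ 2 / (2 * (B / R - u))) ≤ payoff σB σR') ∧
      (∀ σB' : BlueStrategy B R u,
        payoff σB' σR ≤ ENNReal.ofReal (1 - (1 - u) ^ 2 / (2 * (B / R - u)))) := by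
  have hRB : R ≤ B := (one_le_div hR).1 hcase
  have hgap : 0 < B / R - u := by linarith
  set q := (1 - u) / (B / R - u) with hq
  have hq0 : 0 < q := div_pos (by linarith) hgap
  have hq1 : q ≤ 1 := (div_le_one hgap).2 (by linarith)
  have hc : 0 < 2 * R / q := by positivity
  have hqc : q * (2 * R / q) = 2 * R := mul_div_cancel₀ _ hq0.ne'
  have hqB : q * (B - u * R) = (1 - u) * R := by
    rw [← div_mul_cancel₀ (1 - u) hgap.ne', ← hq]
    field_simp
  have hblue : u * R + (1 - u) * (2 * R / q / 2) ≤ B := by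
    field_simp
    linarith
  have hred : q * B + (1 - q) * u * R ≤ R := by linarith
  have hvalue : 1 - (1 - u) ^ 2 / (2 * (B / R - u)) = 1 - (1 - u) * q / 2 := by
    rw [hq]
    field_simp
  refine ⟨uniformBlue hc hu0 hu1.le hR.le hblue, zeroOrUniformRed hq0.le hq1 hc hqc,
    fun σR => ?_, fun σB => ?_⟩
  · have hRc : R / (2 * R / q) = q / 2 := by field_simp
    convert le_payoff_uniformBlue hc hu0 hu1.le hR.le hblue σR using 2
    rw [hvalue, hRc]
    ring
  · rw [hvalue]
    exact payoff_zeroOrUniformRed_le (hR.le.trans hRB) hu0 hu1.le hq0.le hq1 hc hqc hred σB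

/-- In GL-S(B,R,u) with B, R > 0, u ∈ [0,1) and B/R ≥ 1, the value of the
game equals 1 - (1-u)²/(2((B/R) - u)). -/
theorem stmt_9 (B R u : ℝ) (hB : 0 < B) (hR : 0 < R)
    (hu0 : 0 ≤ u) (hu1 : u < 1) (hcase : 1 ≤ B / R) :
    ∃ (σB : BlueStrategy B R u) (σR : RedStrategy R),
      (∀ σR' : RedStrategy R,
        ENNReal.ofReal (1 - (1 - u) ^ 2 / (2 * (B / R - u))) ≤ payoff σB σR') ∧
      (∀ σB' : BlueStrategy B R u,
        payoff σB' σR ≤ ENNReal.ofReal (1 - (1 - u) ^ 2 / (2 * (B / R - u)))) :=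
  stmt_9_general B R u hR hu0 hu1 hcase
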